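/- arXiv:1908.11668 — 2 statements merged into one kernel-verified Lean document; each statement's English description precedes it below -/
import Mathlib

section
/- Let G be a group with a finite generating set, whose Cayley graph X (with the graph metric d) is a geodesic space with δ-thin geodesic triangles, δ > 1. Let u ∈ G have infinite order, and let a > |u| + 2δ be a constant such that for every point z of X with d(z, uz) ≤ |u| + 4δ there exists m ∈ ℤ with d(1, uᵐz) < a. Let h ∈ G satisfy |h| ≤ |h·uᵐ| for every m ∈ ℤ. Then on any geodesic of X from u·h⁻¹ to h⁻¹ there exists a point x with d(1, x) ≤ a + 2δ. -/
open Set Pointwise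

variable {G : Type*} [Group G]

/-- The word length of `g` with respect to a generating set `S`:
the least `n` such that `g` is a product of `n` elements of `S ∪ S⁻¹`. -/
noncomputable def wordLength (S : Set G) (g : G) : ℕ :=
  sInf {n : ℕ | ∃ l : List G, l.length = n ∧ (∀ x ∈ l, x ∈ S ∪ S⁻¹) ∧ l.prod = g}

/-- The word metric associated to a generating set `S`, as a real number. -/
noncomputable def wordDist (S : Set G) (g h : G) : ℝ :=
  (wordLength S (g⁻¹ * h) : ℝ)

/-- The conjugacy norm of (the conjugacy class of) `g`: the minimal word length
of an element conjugate to `g`. -/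
noncomputable def conjNorm (S : Set G) (g : G) : ℕ :=
  sInf {n : ℕ | ∃ x : G, n = wordLength S (x * g * x⁻¹)}

/-- The Lipschitz pseudo-metric, computed on automorphisms (it only depends on the
outer classes): `d_Lip(φ₁, φ₂) = ln sup_c ‖φ₂⁻¹(c)‖ / ‖φ₁⁻¹(c)‖`, the supremum being
over all non-trivial conjugacy classes `c`. -/
noncomputable def dLipAut (S : Set G) (φ₁ φ₂ : MulAut G) : ℝ :=
  Real.log (sSup {r : ℝ | ∃ g : G, g ≠ 1 ∧
    r = (conjNorm S (φ₂⁻¹ g) : ℝ) / (conjNorm S (φ₁⁻¹ g) : ℝ)})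

instance : ((MulAut.conj : G →* MulAut G).range).Normal := by
  constructor
  rintro x ⟨g, rfl⟩ ψ
  refine ⟨ψ g, ?_⟩
  ext y
  simp [MulAut.conj, mul_assoc]

/-- The outer automorphism group `Out(G) = Aut(G)/Inn(G)`. -/
abbrev OutGroup (G : Type*) [Group G] :=
  MulAut G ⧸ (MulAut.conj : G →* MulAut G).range

/-- The Lipschitz pseudo-metric on `Out(G)`; it is computed using any
representatives of the outer classes (the value does not depend on this choice,
whence the infimum). -/
noncomputable def dLipOut (S : Set G) (Φ₁ Φ₂ : OutGroup G) : ℝ :=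
  sInf {d : ℝ | ∃ φ₁ φ₂ : MulAut G, (φ₁ : OutGroup G) = Φ₁ ∧ (φ₂ : OutGroup G) = Φ₂ ∧
    d = dLipAut S φ₁ φ₂}

/-- Gromov hyperbolicity (four-point condition) for the word metric of `(G, S)`. -/
def IsHyperbolic (S : Set G) : Prop :=
  ∃ δ : ℝ, 0 ≤ δ ∧ ∀ x y z w : G,
    wordDist S x z + wordDist S y w ≤
      max (wordDist S x y + wordDist S z w) (wordDist S x w + wordDist S y z) + 2 * δ

/-- A group is virtually cyclic if it has a cyclic subgroup of finite index;
a group is *non-elementary* if it is not virtually cyclic. -/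
def IsVirtuallyCyclic (G : Type*) [Group G] : Prop :=
  ∃ H : Subgroup G, H.FiniteIndex ∧ IsCyclic H

/-- A length function on a group `H`. -/
structure IsLengthFunction {H : Type*} [Group H] (L : H → ℕ) : Prop where
  eq_zero_iff : ∀ h : H, L h = 0 ↔ h = 1
  inv_eq : ∀ h : H, L h⁻¹ = L h
  subadd : ∀ h₁ h₂ : H, L (h₁ * h₂) ≤ L h₁ + L h₂
  growth : ∃ lam : ℝ, 0 < lam ∧ ∀ r : ℕ, ∃ t : Finset H,
    {h : H | L h ≤ r} ⊆ ↑t ∧ (t.card : ℝ) ≤ lam ^ r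

/-- A length function on the (additive) group `ℤ`. -/
structure IsLengthFunctionZ (L : ℤ → ℕ) : Prop where
  eq_zero_iff : ∀ n : ℤ, L n = 0 ↔ n = 0
  neg_eq : ∀ n : ℤ, L (-n) = L n
  subadd : ∀ m n : ℤ, L (m + n) ≤ L m + L n
  growth : ∃ lam : ℝ, 0 < lam ∧ ∀ r : ℕ, ∃ t : Finset ℤ,
    {n : ℤ | L n ≤ r} ⊆ ↑t ∧ (t.card : ℝ) ≤ lam ^ r

/-- `f₁ ≺ f₂` for functions on `ℤ`. -/
def PrecZ (f₁ f₂ : ℤ → ℝ) : Prop := ∃ C : ℝ, 0 < C ∧ ∀ n : ℤ, f₁ n ≤ C * f₂ n + C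

/-- `f₁ ≍ f₂` (equivalence of growth) for functions on `ℤ`. -/
def EquivZ (f₁ f₂ : ℤ → ℝ) : Prop := PrecZ f₁ f₂ ∧ PrecZ f₂ f₁

/-- `f₁ ≺ f₂` for functions on `ℕ`. -/
def PrecN (f₁ f₂ : ℕ → ℝ) : Prop := ∃ C : ℝ, 0 < C ∧ ∀ n : ℕ, f₁ n ≤ C * f₂ n + C

/-- `f₁ ≍ f₂` (equivalence of growth) for functions on `ℕ`. -/
def EquivN (f₁ f₂ : ℕ → ℝ) : Prop := PrecN f₁ f₂ ∧ PrecN f₂ f₁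

/-- A group is finitely presented if it is isomorphic to the quotient of a
finitely generated free group by the normal closure of finitely many relators. -/
def FinitelyPresented (Q : Type*) [Group Q] : Prop :=
  ∃ (n : ℕ) (rels : Finset (FreeGroup (Fin n))),
    Nonempty (PresentedGroup (↑rels : Set (FreeGroup (Fin n))) ≃* Q)

/-- A geodesic from `x` to `y` in a metric space, recorded as its image `s`. -/
def IsGeodesicFrom {X : Type*} [MetricSpace X] (s : Set X) (x y : X) : Prop :=
  ∃ γ : ℝ → X, γ 0 = x ∧ γ (dist x y) = y ∧
    (∀ u ∈ Set.Icc (0:ℝ) (dist x y), ∀ v ∈ Set.Icc (0:ℝ) (dist x y),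
      dist (γ u) (γ v) = |u - v|) ∧
    s = γ '' Set.Icc (0:ℝ) (dist x y)

/-- A geodesic metric space: any two points are joined by a geodesic. -/
def GeodesicSpace (X : Type*) [MetricSpace X] : Prop :=
  ∀ x y : X, ∃ s : Set X, IsGeodesicFrom s x y

/-- All geodesic triangles are `δ`-thin: each side lies in the `δ`-neighborhood of
the union of the other two sides. -/
def ThinTriangles (X : Type*) [MetricSpace X] (δ : ℝ) : Prop :=
  ∀ x y z : X, ∀ s₁ s₂ s₃ : Set X,
    IsGeodesicFrom s₁ x y → IsGeodesicFrom s₂ y z → IsGeodesicFrom s₃ x z →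
    ∀ p ∈ s₃, ∃ q ∈ s₁ ∪ s₂, dist p q ≤ δ

/-- Lemma 2.5 of the paper. Let `X` be the Cayley graph of a
group `G` with finite generating set `S`, formalized as a geodesic metric space
with `δ`-thin triangles (`δ > 1`) on which `G` acts by isometries, together with
an equivariant vertex map `v : G → X` realizing the word metric. Let `u ∈ G`
have infinite order, let `a > |u| + 2δ` be such that every point `z` of the
quasi-axis `A(u) = {z : d(z, uz) ≤ |u| + 4δ}` satisfies `d(1, uᵐz) < a` for some
`m ∈ ℤ`, and let `h` minimize the word length in its coset `h⟨u⟩`. Then any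
geodesic from `u h⁻¹` to `h⁻¹` contains a point `x` with `d(1, x) ≤ a + 2δ`. -/
theorem point_close_to_origin_on_geodesic (G : Type*) [Group G] (S : Set G)
    (hSfin : S.Finite) (hSgen : Subgroup.closure S = ⊤)
    (X : Type*) [MetricSpace X] [MulAction G X]
    (hiso : ∀ g : G, Isometry (fun x : X => g • x))
    (v : G → X)
    (hv : ∀ g h : G, dist (v g) (v h) = wordDist S g h)
    (hveq : ∀ g h : G, v (g * h) = g • v h)
    (δ : ℝ) (hδ : 1 < δ) (hgeo : GeodesicSpace X) (hthin : ThinTriangles X δ)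
    (u : G) (hu : ¬ IsOfFinOrder u)
    (a : ℝ) (ha : (wordLength S u : ℝ) + 2 * δ < a)
    (haxis : ∀ z : X, dist z (u • z) ≤ (wordLength S u : ℝ) + 4 * δ →
      ∃ m : ℤ, dist (v 1) ((u ^ m) • z) < a)
    (h : G) (hmin : ∀ m : ℤ, wordLength S h ≤ wordLength S (h * u ^ m))
    (s : Set X) (hs : IsGeodesicFrom s (v (u * h⁻¹)) (v h⁻¹)) :
    ∃ x ∈ s, dist (v 1) x ≤ a + 2 * δ := by
    classical
  have hδ0 : (0:ℝ) < δ := lt_trans one_pos hδ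
  have hdst : ∀ (g : G) (x y : X), dist (g • x) (g • y) = dist x y :=
    fun g x y => (hiso g).dist_eq x y
  obtain ⟨s₁, hs₁⟩ := hgeo (v 1) (v (u * h⁻¹))
  obtain ⟨γ₁, h₁0, h₁1, h₁iso, h₁im⟩ := id hs₁
  obtain ⟨s₃, hs₃⟩ := hgeo (v 1) (v h⁻¹)
  obtain ⟨γ, h₃0, h₃1, h₃iso, h₃im⟩ := id hs₃
  obtain ⟨γ₂, h₂0, h₂1, h₂iso, h₂im⟩ := id hs
  obtain ⟨sa, hsa⟩ := hgeo (v 1) (v u)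
  obtain ⟨γa, ha0, ha1, haiso, haim⟩ := id hsa
  set L : ℝ := (wordLength S u : ℝ) with hLdef
  set A : ℝ := dist (v 1) (v h⁻¹) with hAdef
  set B : ℝ := dist (v 1) (v (u * h⁻¹)) with hBdef
  have hA0 : (0:ℝ) ≤ A := by rw [hAdef]; exact dist_nonneg
  have hB0 : (0:ℝ) ≤ B := by rw [hBdef]; exact dist_nonneg
  have hL0 : (0:ℝ) ≤ L := by rw [hLdef]; exact Nat.cast_nonneg _
  have hAcast : A = (wordLength S h : ℝ) := by
    rw [hAdef, dist_comm, hv]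
    simp [wordDist]
  have hABle : A ≤ B := by
    have hm1 := hmin (-1)
    rw [zpow_neg_one] at hm1
    have hB' : B = (wordLength S (h * u⁻¹) : ℝ) := by
      rw [hBdef, dist_comm, hv]
      simp [wordDist, mul_inv_rev]
    rw [hAcast, hB']
    exact_mod_cast hm1
  have hvu : v u = u • v 1 := by
    have := hveq u 1
    rwa [mul_one] at this
  have hvuh : v (u * h⁻¹) = u • v h⁻¹ := hveq u h⁻¹
  have hLvu : dist (v 1) (v u) = L := by
    rw [hv]; simp [wordDist, hLdef]
  have hBLA : B ≤ L + A := by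
    have tri := dist_triangle (v 1) (v u) (v (u * h⁻¹))
    have hUP : dist (v u) (v (u * h⁻¹)) = A := by
      rw [hvu, hvuh, hdst]
    rw [hLvu, hUP] at tri
    exact tri
  have hQs : v h⁻¹ ∈ s := by
    rw [h₂im]
    exact ⟨dist (v (u * h⁻¹)) (v h⁻¹), ⟨dist_nonneg, le_refl _⟩, h₂1⟩
  have hsne : s.Nonempty := ⟨_, hQs⟩
  set T : Set ℝ := {t | t ∈ Set.Icc (0:ℝ) A ∧ Metric.infDist (γ t) s ≤ δ} with hTdef
  have hAT : A ∈ T := by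
    refine ⟨⟨hA0, le_refl A⟩, ?_⟩
    have hh : Metric.infDist (γ A) s ≤ dist (γ A) (v h⁻¹) := Metric.infDist_le_dist_of_mem hQs
    rw [h₃1, dist_self] at hh
    rw [h₃1]
    linarith
  have hTne : T.Nonempty := ⟨A, hAT⟩
  have hTbdd : BddBelow T := ⟨0, fun t ht => ht.1.1⟩
  set t₀ : ℝ := sInf T with ht₀def
  have ht₀0 : 0 ≤ t₀ := le_csInf hTne (fun t ht => ht.1.1)
  have ht₀A : t₀ ≤ A := csInf_le hTbdd hAT
  have ht₀mem : t₀ ∈ Set.Icc (0:ℝ) A := ⟨ht₀0, ht₀A⟩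
  have hz1dist : dist (v 1) (γ t₀) = t₀ := by
    have hh := h₃iso 0 ⟨le_refl 0, hA0⟩ t₀ ht₀mem
    rw [h₃0] at hh
    rw [hh, zero_sub, abs_neg, abs_of_nonneg ht₀0]
  have hzQ : dist (γ t₀) (v h⁻¹) = A - t₀ := by
    have hh := h₃iso t₀ ht₀mem A ⟨hA0, le_refl A⟩
    rw [h₃1] at hh
    rw [hh, abs_of_nonpos (by linarith), neg_sub]
  have key₁ : Metric.infDist (γ t₀) s ≤ δ := by
    refine le_of_forall_pos_le_add fun ε hε => ?_
    have hlt : sInf T < t₀ + ε := by rw [← ht₀def]; linarith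
    obtain ⟨t, htT, htlt⟩ := exists_lt_of_csInf_lt hTne hlt
    have ht₀t : t₀ ≤ t := by rw [ht₀def]; exact csInf_le hTbdd htT
    have hd : dist (γ t₀) (γ t) = |t₀ - t| := h₃iso t₀ ht₀mem t htT.1
    have h1 : Metric.infDist (γ t₀) s ≤ Metric.infDist (γ t) s + dist (γ t₀) (γ t) :=
      Metric.infDist_le_infDist_add_dist
    rw [hd, abs_of_nonpos (by linarith), neg_sub] at h1
    linarith [htT.2]
  have ht₀a : t₀ < a := by
    rcases eq_or_lt_of_le ht₀0 with h0 | hpos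
    · rw [← h0]; linarith
    · -- transition point is δ-close to s₁ as well
      have hz₁close : Metric.infDist (γ t₀) s₁ ≤ δ := by
        refine le_of_forall_pos_le_add fun ε hε => ?_
        set t : ℝ := max 0 (t₀ - ε) with htdef
        have ht0 : (0:ℝ) ≤ t := le_max_left _ _
        have htlt : t < t₀ := max_lt hpos (by linarith)
        have htge : t₀ - ε ≤ t := le_max_right _ _
        have htmem : t ∈ Set.Icc (0:ℝ) A := ⟨ht0, le_trans htlt.le ht₀A⟩
        have htnT : t ∉ T := by
          intro hT
          have := csInf_le hTbdd hT
          rw [← ht₀def] at this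
          linarith
        have hfar : ¬ (Metric.infDist (γ t) s ≤ δ) := fun hc => htnT ⟨htmem, hc⟩
        have hts₃ : γ t ∈ s₃ := by rw [h₃im]; exact ⟨t, htmem, rfl⟩
        obtain ⟨q, hq, hdq⟩ :=
          hthin (v 1) (v (u * h⁻¹)) (v h⁻¹) s₁ s s₃ hs₁ hs hs₃ (γ t) hts₃
        rcases hq with hq1 | hq2
        · have h1 : Metric.infDist (γ t₀) s₁ ≤ dist (γ t₀) q :=
            Metric.infDist_le_dist_of_mem hq1
          have h2 : dist (γ t₀) q ≤ dist (γ t₀) (γ t) + dist (γ t) q := dist_triangle _ _ _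
          have hd : dist (γ t₀) (γ t) = |t₀ - t| := h₃iso t₀ ht₀mem t htmem
          rw [hd, abs_of_nonneg (by linarith)] at h2
          linarith
        · exact absurd (le_trans (Metric.infDist_le_dist_of_mem hq2) hdq) hfar
      have hcomp : IsCompact s₁ := by
        rw [h₁im]
        refine IsCompact.image_of_continuousOn isCompact_Icc ?_
        refine LipschitzOnWith.continuousOn (K := 1) ?_
        refine LipschitzOnWith.of_dist_le_mul fun x hx y hy => ?_
        rw [h₁iso x hx y hy]
        simp [Real.dist_eq]
      have hs₁ne : s₁.Nonempty := ⟨γ₁ 0, by rw [h₁im]; exact ⟨0, ⟨le_refl 0, hB0⟩, rfl⟩⟩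
      obtain ⟨z₁, hz₁s, hz₁d⟩ := hcomp.exists_infDist_eq_dist hs₁ne (γ t₀)
      have hzz₁ : dist (γ t₀) z₁ ≤ δ := by rw [← hz₁d]; exact hz₁close
      have hz₁s' := hz₁s
      rw [h₁im] at hz₁s'
      obtain ⟨t₁, ht₁mem, hz₁eq⟩ := hz₁s'
      have hvz₁ : dist (v 1) z₁ = t₁ := by
        have hh := h₁iso 0 ⟨le_refl 0, hB0⟩ t₁ ht₁mem
        rw [h₁0] at hh
        rw [← hz₁eq, hh, zero_sub, abs_neg, abs_of_nonneg ht₁mem.1]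
      have hz₁P : dist z₁ (v (u * h⁻¹)) = B - t₁ := by
        have hh := h₁iso t₁ ht₁mem B ⟨hB0, le_refl B⟩
        rw [h₁1] at hh
        rw [← hz₁eq, hh, abs_of_nonpos (by linarith [ht₁mem.2]), neg_sub]
      have hdistUP : dist (v u) (v (u * h⁻¹)) = A := by
        rw [hvu, hvuh, hdst]
      have hsb : IsGeodesicFrom ((fun x : X => u • x) '' s₃) (v u) (v (u * h⁻¹)) := by
        refine ⟨fun t => u • γ t, ?_, ?_, ?_, ?_⟩
        · show u • γ 0 = v u
          rw [h₃0]; exact hvu.symm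
        · show u • γ (dist (v u) (v (u * h⁻¹))) = v (u * h⁻¹)
          rw [hdistUP, h₃1]; exact hvuh.symm
        · intro t ht t' ht'
          rw [hdistUP] at ht ht'
          show dist (u • γ t) (u • γ t') = |t - t'|
          rw [hdst]
          exact h₃iso t ht t' ht'
        · rw [hdistUP, h₃im]
          exact Set.image_image _ _ _
      obtain ⟨w, hw, hdw⟩ :=
        hthin (v 1) (v u) (v (u * h⁻¹)) sa ((fun x : X => u • x) '' s₃) s₁ hsa hsb hs₁ z₁ hz₁s
      rcases hw with hwa | hwb
      · -- w on the short side [1, u]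
        rw [haim] at hwa
        obtain ⟨ta, htamem, hwe⟩ := hwa
        have hvw : dist (v 1) w = ta := by
          have hh := haiso 0 ⟨le_refl 0, dist_nonneg⟩ ta htamem
          rw [ha0] at hh
          rw [← hwe, hh, zero_sub, abs_neg, abs_of_nonneg htamem.1]
        have htaL : ta ≤ L := by rw [← hLvu]; exact htamem.2
        have tri1 : dist (v 1) (γ t₀) ≤ dist (v 1) w + dist w z₁ + dist z₁ (γ t₀) :=
          dist_triangle4 _ _ _ _
        rw [hz1dist, hvw, dist_comm w z₁, dist_comm z₁ (γ t₀)] at tri1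
        linarith
      · -- w on the translated side u • [1, h⁻¹]
        obtain ⟨z', hz', hwe⟩ := hwb
        have hw' : w = u • z' := hwe.symm
        rw [h₃im] at hz'
        obtain ⟨t', ht'mem, hz'eq⟩ := hz'
        have hwP : dist w (v (u * h⁻¹)) = A - t' := by
          rw [hw', ← hz'eq, hvuh, hdst]
          have hh := h₃iso t' ht'mem A ⟨hA0, le_refl A⟩
          rw [h₃1] at hh
          rw [hh, abs_of_nonpos (by linarith [ht'mem.2]), neg_sub]
        have e1 : |(A - t') - (B - t₁)| ≤ δ := by
          have habs := abs_dist_sub_le w z₁ (v (u * h⁻¹))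
          rw [hwP, hz₁P, dist_comm w z₁] at habs
          exact le_trans habs hdw
        have e2 : |t₁ - t₀| ≤ δ := by
          have habs := abs_dist_sub_le z₁ (γ t₀) (v 1)
          rw [dist_comm z₁ (v 1), dist_comm (γ t₀) (v 1), hvz₁, hz1dist] at habs
          refine le_trans habs ?_
          rw [dist_comm]; exact hzz₁
        have e3 : |t' - t₀| ≤ L + 2 * δ := by
          rw [abs_le] at e1 e2 ⊢
          constructor <;> linarith [hABle, hBLA, e1.1, e1.2, e2.1, e2.2]
        have hwuz : dist w (u • γ t₀) = |t' - t₀| := by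
          rw [hw', ← hz'eq, hdst]
          exact h₃iso t' ht'mem t₀ ht₀mem
        have dzuz : dist (γ t₀) (u • γ t₀) ≤ L + 4 * δ := by
          have tri := dist_triangle4 (γ t₀) z₁ w (u • γ t₀)
          rw [hwuz] at tri
          have := abs_le.mp e3
          linarith [hzz₁, hdw, this.2]
        obtain ⟨m, hm⟩ := haxis (γ t₀) dzuz
        have hlow : A ≤ dist (v 1) ((u ^ m) • v h⁻¹) := by
          rw [← hveq, dist_comm, hv, hAcast]
          have hm2 := hmin (-m)
          have heq : wordDist S (u ^ m * h⁻¹) 1 = (wordLength S (h * u ^ (-m)) : ℝ) := by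
            simp [wordDist, mul_inv_rev, zpow_neg]
          rw [heq]
          exact_mod_cast hm2
        have tri2 := dist_triangle (v 1) ((u ^ m) • γ t₀) ((u ^ m) • v h⁻¹)
        rw [hdst, hzQ] at tri2
        linarith
  have hlt2 : Metric.infDist (γ t₀) s < 2 * δ := by linarith
  obtain ⟨x, hxs, hxd⟩ := (Metric.infDist_lt_iff hsne).mp hlt2
  refine ⟨x, hxs, ?_⟩
  have tri := dist_triangle (v 1) (γ t₀) x
  rw [hz1dist] at tri
  linarith
end

section
/- Let F be the free group on two generators a, b, with the generating set {a, b}, let φ ∈ Aut(F) be the automorphism determined by φ(a) = a and φ(b) = ba, and let Φ ∈ Out(F) be its outer class. Then the function n ↦ d_Lip(1, Φⁿ) grows logarithmically: it is equivalent to n ↦ ln(n+1); in particular there exists C > 0 such that (1/C)·ln(n+1) − C ≤ d_Lip(1, Φⁿ) ≤ C·ln(n+1) + C for all n ∈ ℕ. -/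
open Set Pointwise

variable {G : Type*} [Group G]

/-! The map `g ↦ (φ⁻ⁿ)(g)` sends each letter to a word of length at most `n + 1`, so it stretches
every conjugacy norm by at most `n + 1`; the stretch factor is attained at `b`, since
`φ⁻ⁿ(b) = b a⁻ⁿ` and a homomorphism `F(a, b) → ℤ` with `a ↦ -1`, `b ↦ 1` bounds conjugacy norms
from below. Hence `d_Lip(1, Φⁿ) = ln (n + 1)` exactly. -/

section WordLength

variable {S : Set G}

theorem wordLength_prod_le_length (l : List G) (hl : ∀ x ∈ l, x ∈ S ∪ S⁻¹) :
    wordLength S l.prod ≤ l.length :=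
  Nat.sInf_le ⟨l, rfl, hl, rfl⟩

theorem wordLength_one : wordLength S 1 = 0 :=
  Nat.le_zero.mp (wordLength_prod_le_length [] (by simp))

theorem exists_list_length_eq_wordLength (hS : Subgroup.closure S = ⊤) (g : G) :
    ∃ l : List G, l.length = wordLength S g ∧ (∀ x ∈ l, x ∈ S ∪ S⁻¹) ∧ l.prod = g := by
  have hg : g ∈ Submonoid.closure (S ∪ S⁻¹) := by
    rw [← Subgroup.closure_toSubmonoid, hS]
    trivial
  obtain ⟨w, hw, hwg⟩ := Submonoid.exists_list_of_mem_closure hg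
  exact Nat.sInf_mem (s := {n : ℕ | ∃ l : List G, l.length = n ∧ (∀ x ∈ l, x ∈ S ∪ S⁻¹) ∧
    l.prod = g}) ⟨w.length, w, rfl, hw, hwg⟩

theorem wordLength_mul_le (hS : Subgroup.closure S = ⊤) (g h : G) :
    wordLength S (g * h) ≤ wordLength S g + wordLength S h := by
  obtain ⟨l₁, hlen₁, hl₁, rfl⟩ := exists_list_length_eq_wordLength hS g
  obtain ⟨l₂, hlen₂, hl₂, rfl⟩ := exists_list_length_eq_wordLength hS h
  rw [← hlen₁, ← hlen₂, ← List.length_append, ← List.prod_append]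
  exact wordLength_prod_le_length _ fun x hx => (List.mem_append.mp hx).elim (hl₁ x) (hl₂ x)

theorem le_mul_wordLength (hS : Subgroup.closure S = ⊤) {f : G → ℕ} (hf₁ : f 1 = 0)
    (hf : ∀ x y, f (x * y) ≤ f x + f y) {K : ℕ} (hK : ∀ s ∈ S ∪ S⁻¹, f s ≤ K) (g : G) :
    f g ≤ K * wordLength S g := by
  obtain ⟨l, hlen, hl, rfl⟩ := exists_list_length_eq_wordLength hS g
  rw [← hlen]
  clear hlen
  induction l with
  | nil => simp [hf₁]
  | cons x l ih =>
    rw [List.prod_cons, List.length_cons, mul_add_one, add_comm]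
    exact (hf x l.prod).trans (add_le_add (hK x (hl x List.mem_cons_self))
      (ih fun y hy => hl y (List.mem_cons_of_mem x hy)))

theorem one_le_wordLength (hS : Subgroup.closure S = ⊤) {g : G} (hg : g ≠ 1) :
    1 ≤ wordLength S g := by
  obtain ⟨l, hlen, -, rfl⟩ := exists_list_length_eq_wordLength hS g
  rw [← hlen, Nat.one_le_iff_ne_zero, Ne, List.length_eq_zero_iff]
  rintro rfl
  exact hg List.prod_nil

theorem exists_conjNorm_eq_wordLength (S : Set G) (g : G) :
    ∃ x : G, conjNorm S g = wordLength S (x * g * x⁻¹) :=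
  Nat.sInf_mem (s := {n : ℕ | ∃ x : G, n = wordLength S (x * g * x⁻¹)}) ⟨_, 1, rfl⟩

theorem conjNorm_le_wordLength (S : Set G) (g : G) : conjNorm S g ≤ wordLength S g :=
  Nat.sInf_le ⟨1, by simp⟩

theorem one_le_conjNorm (hS : Subgroup.closure S = ⊤) {g : G} (hg : g ≠ 1) :
    1 ≤ conjNorm S g := by
  obtain ⟨x, hx⟩ := exists_conjNorm_eq_wordLength S g
  exact hx ▸ one_le_wordLength hS (mt conj_eq_one_iff.mp hg)

theorem conjNorm_map_le {H : Type*} [Group H] {T : Set H} (hS : Subgroup.closure S = ⊤)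
    (hT : Subgroup.closure T = ⊤) (ψ : G →* H) {K : ℕ}
    (hK : ∀ s ∈ S ∪ S⁻¹, wordLength T (ψ s) ≤ K) (g : G) :
    conjNorm T (ψ g) ≤ K * conjNorm S g := by
  obtain ⟨x, hx⟩ := exists_conjNorm_eq_wordLength S g
  have hconj : conjNorm T (ψ g) ≤ wordLength T (ψ (x * g * x⁻¹)) := by
    rw [map_mul, map_mul, map_inv]
    exact Nat.sInf_le ⟨ψ x, rfl⟩
  refine hx ▸ hconj.trans (le_mul_wordLength hS (f := fun y => wordLength T (ψ y)) ?_ ?_ hK _)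
  · simp [wordLength_one]
  · intro y z
    simpa only [map_mul] using wordLength_mul_le hT (ψ y) (ψ z)

theorem natAbs_le_conjNorm (hS : Subgroup.closure S = ⊤) (χ : G →* Multiplicative ℤ)
    (hχ : ∀ s ∈ S ∪ S⁻¹, (χ s).toAdd.natAbs ≤ 1) (g : G) :
    (χ g).toAdd.natAbs ≤ conjNorm S g := by
  obtain ⟨x, hx⟩ := exists_conjNorm_eq_wordLength S g
  have hχg : χ g = χ (x * g * x⁻¹) := by
    rw [map_mul, map_mul, map_inv, mul_inv_cancel_comm]
  rw [hx, hχg, ← one_mul (wordLength S _)]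
  refine le_mul_wordLength hS (f := fun y => (χ y).toAdd.natAbs) (by simp) ?_ hχ _
  intro y z
  simpa only [map_mul, toAdd_mul] using Int.natAbs_add_le _ _

theorem dLipAut_one_eq_log (hS : Subgroup.closure S = ⊤) (ψ : MulAut G) (K : ℝ)
    (hle : ∀ g ≠ 1, (conjNorm S (ψ⁻¹ g) : ℝ) ≤ K * conjNorm S g)
    {g₀ : G} (hg₀ : g₀ ≠ 1) (heq : (conjNorm S (ψ⁻¹ g₀) : ℝ) = K * conjNorm S g₀) :
    dLipAut S 1 ψ = Real.log K := by
  have hpos : ∀ {g : G}, g ≠ 1 → (0 : ℝ) < conjNorm S g := fun hg => by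
    exact_mod_cast one_le_conjNorm hS hg
  suffices h : IsGreatest {r : ℝ | ∃ g : G, g ≠ 1 ∧
      r = (conjNorm S (ψ⁻¹ g) : ℝ) / (conjNorm S ((1 : MulAut G)⁻¹ g) : ℝ)} K by
    rw [dLipAut, h.csSup_eq]
  refine ⟨⟨g₀, hg₀, ?_⟩, ?_⟩
  · rw [inv_one, MulAut.one_apply, heq, mul_div_cancel_right₀ _ (hpos hg₀).ne']
  · rintro r ⟨g, hg, rfl⟩
    rw [inv_one, MulAut.one_apply, div_le_iff₀ (hpos hg)]
    exact hle g hg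

end WordLength

section DehnTwist

variable {φ : MulAut G} {a b : G}

theorem pow_apply_of_twist (ha : φ a = a) (hb : φ b = b * a) (n : ℕ) :
    (φ ^ n) a = a ∧ (φ ^ n) b = b * a ^ n := by
  induction n with
  | zero => simp
  | succ n ih =>
    obtain ⟨iha, ihb⟩ := ih
    refine ⟨by rw [pow_succ, MulAut.mul_apply, ha, iha], ?_⟩
    rw [pow_succ, MulAut.mul_apply, hb, map_mul, iha, ihb, pow_succ, mul_assoc]

theorem inv_pow_apply_of_twist (ha : φ a = a) (hb : φ b = b * a) (n : ℕ) :
    (φ ^ n)⁻¹ a = a ∧ (φ ^ n)⁻¹ b = b * a⁻¹ ^ n := by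
  obtain ⟨han, hbn⟩ := pow_apply_of_twist ha hb n
  constructor
  · rw [MulAut.inv_apply, MulEquiv.symm_apply_eq, han]
  · rw [MulAut.inv_apply, MulEquiv.symm_apply_eq, map_mul, map_pow, map_inv, han, hbn, inv_pow,
      mul_inv_cancel_right]

end DehnTwist

section TwoGenerators

variable {a b : G}

theorem mem_pair_union_inv_iff {s : G} :
    s ∈ ({a, b} : Set G) ∪ ({a, b} : Set G)⁻¹ ↔ s = a ∨ s = b ∨ s = a⁻¹ ∨ s = b⁻¹ := by
  simp only [Set.mem_union, Set.mem_insert_iff, Set.mem_singleton_iff, Set.mem_inv,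
    inv_eq_iff_eq_inv, or_assoc]

theorem wordLength_mul_inv_pow_le (n : ℕ) : wordLength {a, b} (b * a⁻¹ ^ n) ≤ n + 1 := by
  have h := wordLength_prod_le_length (S := {a, b}) (b :: List.replicate n a⁻¹) (by
    simp only [List.mem_cons, List.mem_replicate, mem_pair_union_inv_iff]
    rintro x (rfl | ⟨-, rfl⟩) <;> simp)
  rwa [List.prod_cons, List.prod_replicate, List.length_cons, List.length_replicate] at h

theorem conjNorm_inv_pow_twist_le {φ : MulAut G} (hS : Subgroup.closure {a, b} = ⊤)
    (ha : φ a = a) (hb : φ b = b * a) (n : ℕ) (g : G) :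
    conjNorm {a, b} ((φ ^ n)⁻¹ g) ≤ (n + 1) * conjNorm {a, b} g := by
  obtain ⟨han, hbn⟩ := inv_pow_apply_of_twist ha hb n
  refine conjNorm_map_le hS hS ((φ ^ n)⁻¹ : MulAut G).toMonoidHom (fun s hs => ?_) g
  have hletter : ∀ s ∈ ({a, b} : Set G) ∪ ({a, b} : Set G)⁻¹, wordLength {a, b} s ≤ 1 :=
    fun s hs => by simpa using wordLength_prod_le_length [s] (by simpa using hs)
  have hinv : wordLength {a, b} (b * a⁻¹ ^ n)⁻¹ ≤ n + 1 := by
    have h := wordLength_prod_le_length (S := {a, b}) (List.replicate n a ++ [b⁻¹]) (by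
      simp only [List.mem_append, List.mem_replicate, List.mem_singleton, mem_pair_union_inv_iff]
      rintro x (⟨-, rfl⟩ | rfl) <;> simp)
    rw [mul_inv_rev, ← inv_pow, inv_inv]
    rwa [List.prod_append, List.prod_replicate, List.prod_singleton, List.length_append,
      List.length_replicate, List.length_singleton] at h
  simp only [MulEquiv.coe_toMonoidHom]
  rcases mem_pair_union_inv_iff.mp hs with hs' | hs' | hs' | hs' <;> rw [hs']
  · rw [han]
    exact (hletter a (by simp)).trans (by omega)
  · rw [hbn]
    exact wordLength_mul_inv_pow_le n
  · rw [map_inv, han]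
    exact (hletter a⁻¹ (by simp)).trans (by omega)
  · rw [map_inv, hbn]
    exact hinv

end TwoGenerators

section FreeGroup

open FreeGroup

theorem FreeGroup.closure_of_zero_of_one : Subgroup.closure {of (0 : Fin 2), of 1} = ⊤ := by
  rw [← closure_range_of]
  congr 1
  ext x
  simp [Fin.exists_fin_two, eq_comm]

theorem FreeGroup.conjNorm_of_one_mul_inv_pow (n : ℕ) :
    conjNorm {of (0 : Fin 2), of 1} (of 1 * (of 0)⁻¹ ^ n) = n + 1 := by
  let χ : FreeGroup (Fin 2) →* Multiplicative ℤ := lift ![Multiplicative.ofAdd (-1), .ofAdd 1]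
  refine le_antisymm ((conjNorm_le_wordLength _ _).trans (wordLength_mul_inv_pow_le n)) ?_
  have hχ := natAbs_le_conjNorm closure_of_zero_of_one χ (fun s hs => by
    rcases mem_pair_union_inv_iff.mp hs with rfl | rfl | rfl | rfl <;> simp [χ])
    (of 1 * (of 0)⁻¹ ^ n)
  have hχ_eval : (χ (of 1 * (of 0)⁻¹ ^ n)).toAdd = n + 1 := by
    simp [χ, add_comm]
  rw [hχ_eval] at hχ
  omega

theorem FreeGroup.dLipAut_one_pow_twist {φ : MulAut (FreeGroup (Fin 2))} (ha : φ (of 0) = of 0)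
    (hb : φ (of 1) = of 1 * of 0) (n : ℕ) :
    dLipAut {of (0 : Fin 2), of 1} 1 (φ ^ n) = Real.log (n + 1) := by
  have hb₁ : conjNorm {of (0 : Fin 2), of 1} (of 1) = 1 := by
    simpa using conjNorm_of_one_mul_inv_pow 0
  refine dLipAut_one_eq_log closure_of_zero_of_one (φ ^ n) (n + 1) (fun g _ => ?_)
    (of_ne_one 1) ?_
  · exact_mod_cast conjNorm_inv_pow_twist_le closure_of_zero_of_one ha hb n g
  · rw [(inv_pow_apply_of_twist ha hb n).2, conjNorm_of_one_mul_inv_pow, hb₁]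
    push_cast
    ring

end FreeGroup

/-- For the automorphism `φ` of the free group `F(a,b)` with
`φ(a) = a`, `φ(b) = ba` (a Dehn twist on the punctured torus), the map
`n ↦ d_Lip(1, Φⁿ)` grows logarithmically. Here `a = FreeGroup.of 0`,
`b = FreeGroup.of 1`, and the Lipschitz pseudo-metric is computed on automorphism
representatives (it only depends on the outer classes). -/
theorem dehn_twist_log_growth (φ : MulAut (FreeGroup (Fin 2)))
    (hφa : φ (FreeGroup.of (0 : Fin 2)) = FreeGroup.of (0 : Fin 2))
    (hφb : φ (FreeGroup.of (1 : Fin 2)) =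
      FreeGroup.of (1 : Fin 2) * FreeGroup.of (0 : Fin 2)) :
    ∃ C : ℝ, 0 < C ∧ ∀ n : ℕ,
      (1 / C) * Real.log (n + 1) - C ≤
          dLipAut {FreeGroup.of (0 : Fin 2), FreeGroup.of (1 : Fin 2)} 1 (φ ^ n) ∧
        dLipAut {FreeGroup.of (0 : Fin 2), FreeGroup.of (1 : Fin 2)} 1 (φ ^ n) ≤
          C * Real.log (n + 1) + C := by
  refine ⟨1, one_pos, fun n => ?_⟩
  rw [FreeGroup.dLipAut_one_pow_twist hφa hφb n]
  constructor <;> linarith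
end
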